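/- arXiv:1812.04928 — 2 statements merged into one kernel-verified Lean document; each statement's English description precedes it below -/
import Mathlib

section
/- Let (Ω, F, P) be a probability space, let p ≥ 1 and k ≥ 2 be integers, let q ∈ (0, 1], and let H0 ⊆ {1, …, p}. Let W_{j,i} : Ω → ℝ for j = 1, …, p and i = 1, …, k be random variables, and let T : Ω → ℝ be a measurable function. Define D_T(ω) = ∑_{j=1}^p 1{W_{j,1}(ω) ≥ T(ω)} and K_T(ω) = (1/(k−1)) ∑_{j=1}^p ∑_{i=2}^k 1{W_{j,i}(ω) ≥ T(ω)}. Assume: (a) for every ω ∈ Ω, K_T(ω) ≤ q · D_T(ω) (the defining property of the knockoff threshold T); and (b) for every u ∈ H0 and every i ∈ {2, …, k}, E[1{W_{u,1} ≥ T} / (D_T ∨ 1)] ≤ E[1{W_{u,i} ≥ T} / (D_T ∨ 1)]. Then the false discovery rate satisfies FDR = E[ (∑_{j ∈ H0} 1{W_{j,1} ≥ T}) / (D_T ∨ 1) ] ≤ q. -/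
/-!
Normalise every indicator `1{W_{j,i} ≥ T}` by `D_T ∨ 1`. By assumption (6), for a null `j`
the expectation of the original normalised indicator is at most the average over the `k - 1`
knockoff copies of theirs; dropping the null restriction only increases the sum, and the sum of
all normalised knockoff indicators, averaged over the copies, is `K_T / (D_T ∨ 1) ≤ q`
pointwise by the choice of `T`.
-/

open MeasureTheory Finset

theorem card_filter_val_ne_zero (k : ℕ) :
    #(univ.filter fun i : Fin k => (i : ℕ) ≠ 0) = k - 1 := by
  cases k with
  | zero => rfl
  | succ k =>
    have : (univ.filter fun i : Fin (k + 1) => (i : ℕ) ≠ 0) = univ.erase 0 := by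
      ext i
      simp [Fin.val_eq_zero_iff]
    rw [this, card_erase_of_mem (mem_univ 0), card_univ, Fintype.card_fin, Nat.add_sub_cancel]

section

variable {Ω : Type*} [MeasurableSpace Ω] {μ : Measure Ω}

theorem integrable_ite_le_div_max_one [IsFiniteMeasure μ] {x t d : Ω → ℝ}
    (hx : Measurable x) (ht : Measurable t) (hd : Measurable d) :
    Integrable (fun ω => (if x ω ≥ t ω then (1 : ℝ) else 0) / max (d ω) 1) μ := by
  refine Integrable.of_bound (C := 1) ?_ (Filter.Eventually.of_forall fun ω => ?_)
  · exact ((measurable_const.ite (measurableSet_le ht hx) measurable_const).div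
      (hd.max measurable_const)).aestronglyMeasurable
  · have hpos : (0 : ℝ) < max (d ω) 1 := lt_max_of_lt_right one_pos
    rw [Real.norm_eq_abs, abs_div, abs_of_pos hpos, div_le_one hpos]
    split_ifs <;> simp

theorem integral_sum_le_of_le_integral_of_average_le [IsProbabilityMeasure μ]
    {ι κ : Type*} [Fintype ι] (H0 : Finset ι) {S : Finset κ} (hS : S.Nonempty) (i₀ : κ)
    (f : ι → κ → Ω → ℝ) (hf : ∀ j i, Integrable (f j i) μ) (hf0 : ∀ j i, 0 ≤ᵐ[μ] f j i)
    (hle : ∀ j ∈ H0, ∀ i ∈ S, ∫ ω, f j i₀ ω ∂μ ≤ ∫ ω, f j i ω ∂μ) {q : ℝ}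
    (hq : ∀ᵐ ω ∂μ, (∑ j, ∑ i ∈ S, f j i ω) / #S ≤ q) :
    ∫ ω, ∑ j ∈ H0, f j i₀ ω ∂μ ≤ q := by
  have hsum_int : ∀ j, Integrable (fun ω => ∑ i ∈ S, f j i ω) μ := fun j =>
    integrable_finsetSum S fun i _ => hf j i
  calc ∫ ω, ∑ j ∈ H0, f j i₀ ω ∂μ
      = ∑ j ∈ H0, ∫ ω, f j i₀ ω ∂μ := integral_finsetSum H0 fun j _ => hf j i₀
    _ ≤ ∑ j ∈ H0, (∑ i ∈ S, ∫ ω, f j i ω ∂μ) / #S := by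
        refine sum_le_sum fun j hj => ?_
        rw [← expect_eq_sum_div_card]
        exact le_expect hS (hle j hj)
    _ ≤ ∑ j, (∑ i ∈ S, ∫ ω, f j i ω ∂μ) / #S :=
        sum_le_sum_of_subset_of_nonneg (subset_univ H0) fun j _ _ =>
          div_nonneg (sum_nonneg fun i _ => integral_nonneg_of_ae (hf0 j i)) (Nat.cast_nonneg _)
    _ = ∫ ω, (∑ j, ∑ i ∈ S, f j i ω) / #S ∂μ := by
        rw [integral_div, integral_finsetSum univ fun j _ => hsum_int j, ← sum_div]
        congr 1
        exact sum_congr rfl fun j _ => (integral_finsetSum S fun i _ => hf j i).symm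
    _ ≤ ∫ _, q ∂μ :=
        integral_mono_ae ((integrable_finsetSum univ fun j _ => hsum_int j).div_const _)
          (integrable_const q) hq
    _ = q := by simp

end

/-- Theorem 1 of "Multiple model-free knockoffs" (Holden & Hellton).
`W j i` for `j = 1,…,p` and `i = 1,…,k` (here `i = 0 : Fin k` plays the role of
the original statistic `i = 1`, and the indices with `(i : ℕ) ≠ 0` play the role
of the knockoff copies `i = 2,…,k`).  With
`D_T(ω) = ∑_j 1{W_{j,1}(ω) ≥ T(ω)}` and
`K_T(ω) = (1/(k-1)) ∑_j ∑_{i≥2} 1{W_{j,i}(ω) ≥ T(ω)}`,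
assume (a) `K_T ≤ q·D_T` pointwise (the defining property of the knockoff
threshold `T`) and (b) assumption (6):
`E[1{W_{u,1} ≥ T}/(D_T ∨ 1)] ≤ E[1{W_{u,i} ≥ T}/(D_T ∨ 1)]` for all null `u`
and all `i ≥ 2`.  Then the false discovery rate
`FDR = E[(∑_{j ∈ H0} 1{W_{j,1} ≥ T})/(D_T ∨ 1)]` is at most `q`. -/
theorem multiple_knockoffs_FDR_control
    {Ω : Type*} [MeasurableSpace Ω] (P : Measure Ω) [IsProbabilityMeasure P]
    (p k : ℕ) (hk : 2 ≤ k)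
    (q : ℝ) (hq0 : 0 < q)
    (H0 : Finset (Fin p))
    (W : Fin p → Fin k → Ω → ℝ) (hWmeas : ∀ j i, Measurable (W j i))
    (T : Ω → ℝ) (hTmeas : Measurable T)
    (D : Ω → ℝ)
    (hD : ∀ ω, D ω = ∑ j : Fin p, if W j ⟨0, by omega⟩ ω ≥ T ω then (1 : ℝ) else 0)
    (K : Ω → ℝ)
    (hK : ∀ ω, K ω = (1 / ((k : ℝ) - 1)) *
      ∑ j : Fin p, ∑ i ∈ Finset.univ.filter (fun i : Fin k => (i : ℕ) ≠ 0),
        (if W j i ω ≥ T ω then (1 : ℝ) else 0))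
    (ha : ∀ ω, K ω ≤ q * D ω)
    (hb : ∀ u ∈ H0, ∀ i : Fin k, (i : ℕ) ≠ 0 →
      (∫ ω, (if W u ⟨0, by omega⟩ ω ≥ T ω then (1 : ℝ) else 0) / max (D ω) 1 ∂P) ≤
        ∫ ω, (if W u i ω ≥ T ω then (1 : ℝ) else 0) / max (D ω) 1 ∂P) :
    (∫ ω, (∑ j ∈ H0, if W j ⟨0, by omega⟩ ω ≥ T ω then (1 : ℝ) else 0) /
        max (D ω) 1 ∂P) ≤ q := by
  set S := univ.filter fun i : Fin k => (i : ℕ) ≠ 0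
  have hS : S.Nonempty := ⟨⟨1, by omega⟩, by simp [S]⟩
  have hS_card : (#S : ℝ) = k - 1 := by
    rw [card_filter_val_ne_zero, Nat.cast_sub (by omega), Nat.cast_one]
  have hDmeas : Measurable D := by
    rw [funext hD]
    exact Finset.measurable_sum _ fun j _ =>
      measurable_const.ite (measurableSet_le hTmeas (hWmeas j _)) measurable_const
  have hK_div : ∀ ω, K ω / max (D ω) 1 ≤ q := fun ω =>
    (div_le_iff₀ (lt_max_of_lt_right one_pos)).2
      ((ha ω).trans (mul_le_mul_of_nonneg_left (le_max_left _ _) hq0.le))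
  simp_rw [sum_div]
  refine integral_sum_le_of_le_integral_of_average_le H0 hS _ _
    (fun j i => integrable_ite_le_div_max_one (hWmeas j i) hTmeas hDmeas)
    (fun j i => Filter.Eventually.of_forall fun ω => by positivity)
    (fun j hj i hi => hb j hj i (mem_filter.1 hi).2) (Filter.Eventually.of_forall fun ω => ?_)
  convert hK_div ω using 1
  rw [hK ω, hS_card]
  simp only [← sum_div]
  ring
end

section
/- Let p ≥ 1, let Σ be a symmetric positive definite p × p real matrix, let s ∈ ℝ^p, and set D = diag(s). Assume V := 2D − D Σ⁻¹ D is positive definite. Let G be the 2p × 2p block matrix G = [[Σ, Σ − D], [Σ − D, Σ]]. Then G is positive definite, and if X is a random vector distributed N(0, Σ) on ℝ^p and, conditionally on X = x, the vector X̃ is distributed N((I − D Σ⁻¹) x, V) on ℝ^p, then the joint vector (X, X̃) is distributed N(0, G) on ℝ^{2p}. Equivalently, the probability measure on ℝ^p × ℝ^p obtained by first sampling x from the multivariate Gaussian N(0, Σ) and then sampling x̃ from the multivariate Gaussian N((I − D Σ⁻¹) x, V) equals the multivariate Gaussian measure N(0, G) on ℝ^{2p}. -/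
/-!
With `A = 1 - D Σ⁻¹` one has `Σ Aᵀ = A Σ = Σ - D` and `A Σ Aᵀ + V = Σ`, so `G` is the covariance
`[[Σ, Σ Aᵀ], [A Σ, A Σ Aᵀ + V]]` of `(X, A X + W)` with `W ~ N(0, V)` independent of `X`. It factors
as `L (Σ ⊕ V) Lᵀ` with `L = [[1, 0], [A, 1]]` unipotent. Hence `G` is positive definite,
`det G = det Σ · det V`, and `(x, x̃) ⬝ G⁻¹ (x, x̃) = x ⬝ Σ⁻¹ x + (x̃ - A x) ⬝ V⁻¹ (x̃ - A x)`, so the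
density of `N(0, G)` at `(x, x̃)` is the density of `N(0, Σ)` at `x` times that of `N(A x, V)` at
`x̃`, which is the density of the two-stage sampling.
-/

open MeasureTheory Matrix

/-- The density of the multivariate Gaussian distribution `N(m, C)` on `ι → ℝ`
(for an invertible covariance matrix `C`). -/
noncomputable def gaussianPdf {ι : Type*} [Fintype ι] [DecidableEq ι] (m : ι → ℝ)
    (C : Matrix ι ι ℝ) (x : ι → ℝ) : ℝ :=
  (Real.sqrt ((2 * Real.pi) ^ (Fintype.card ι) * C.det))⁻¹ *
    Real.exp (-(1 / 2) * ((x - m) ⬝ᵥ (C⁻¹ *ᵥ (x - m))))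

/-- The multivariate Gaussian measure `N(m, C)` on `ι → ℝ`, defined by its
density with respect to Lebesgue measure. -/
noncomputable def gaussianMeasure {ι : Type*} [Fintype ι] [DecidableEq ι] (m : ι → ℝ)
    (C : Matrix ι ι ℝ) : Measure (ι → ℝ) :=
  volume.withDensity (fun x => ENNReal.ofReal (gaussianPdf m C x))

open ProbabilityTheory
open scoped ENNReal

section Kernel

variable {α β γ : Type*} [MeasurableSpace α] [MeasurableSpace β] [MeasurableSpace γ]

theorem MeasureTheory.Measure.bind_map_eq_map_compProd (μ : Measure α) [SFinite μ]
    (κ : Kernel α β) [IsSFiniteKernel κ] {f : α × β → γ} (hf : Measurable f) :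
    μ.bind (fun a => (κ a).map (fun b => f (a, b))) = (μ ⊗ₘ κ).map f := by
  have hfa (a : α) : Measurable fun b => f (a, b) := hf.comp measurable_prodMk_left
  have hκf : Measurable fun a => (κ a).map (fun b => f (a, b)) :=
    Measure.measurable_of_measurable_coe _ fun s hs => by
      simp_rw [Measure.map_apply (hfa _) hs]
      exact κ.measurable_kernel_prodMk_left (hf hs)
  ext s hs
  rw [Measure.bind_apply hs hκf.aemeasurable, Measure.map_apply hf hs,
    Measure.compProd_apply (hf hs)]
  exact lintegral_congr fun a => Measure.map_apply (hfa a) hs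

theorem MeasureTheory.Measure.withDensity_compProd_withDensity (μ : Measure α) (ν : Measure β)
    [SFinite μ] [SFinite ν] {f : α → ℝ≥0∞} {g : α → β → ℝ≥0∞} (hf : Measurable f)
    (hg : Measurable (Function.uncurry g)) (hg_ne_top : ∀ a b, g a b ≠ ∞) :
    μ.withDensity f ⊗ₘ (Kernel.const α ν).withDensity g =
      (μ.prod ν).withDensity (fun q => f q.1 * g q.1 q.2) := by
  have := Kernel.IsSFiniteKernel.withDensity (Kernel.const α ν) hg_ne_top
  rw [Measure.compProd_withDensity hg, Measure.compProd_const, prod_withDensity_left hf]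
  exact (withDensity_mul _ (hf.comp measurable_fst) hg).symm

theorem MeasureTheory.MeasurePreserving.map_withDensity {μ : Measure α} {ν : Measure β}
    {e : α ≃ᵐ β} (he : MeasurePreserving e μ ν) (g : α → ℝ≥0∞) :
    (μ.withDensity g).map e = ν.withDensity (g ∘ e.symm) := by
  ext s hs
  rw [Measure.map_apply e.measurable hs, withDensity_apply _ (e.measurable hs),
    withDensity_apply _ hs, ← he.setLIntegral_comp_preimage_emb e.measurableEmbedding]
  simp

end Kernel

namespace Matrix

variable {m n : Type*} [Fintype m] [Fintype n]

theorem PosDef.fromBlocks_zero_zero {S : Matrix m m ℝ} {V : Matrix n n ℝ} (hS : S.PosDef)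
    (hV : V.PosDef) : (fromBlocks S 0 0 V).PosDef := by
  have hS' := posDef_iff_dotProduct_mulVec.1 hS
  have hV' := posDef_iff_dotProduct_mulVec.1 hV
  rw [posDef_iff_dotProduct_mulVec]
  refine ⟨hS.1.fromBlocks conjTranspose_zero hV.1, fun z hz => ?_⟩
  obtain ⟨x, y, rfl⟩ : ∃ x y, z = Sum.elim x y := ⟨_, _, (Sum.elim_comp_inl_inr z).symm⟩
  have hxy : x ≠ 0 ∨ y ≠ 0 := by
    contrapose! hz
    simp [hz]
  simp only [fromBlocks_mulVec, zero_mulVec, add_zero, zero_add, Sum.elim_comp_inl,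
    Sum.elim_comp_inr, star_trivial, sumElim_dotProduct_sumElim] at hS' hV' ⊢
  rcases hxy with hx | hy
  · exact add_pos_of_pos_of_nonneg (hS'.2 hx) (hV.posSemidef.dotProduct_mulVec_nonneg y)
  · exact add_pos_of_nonneg_of_pos (hS.posSemidef.dotProduct_mulVec_nonneg x) (hV'.2 hy)

/-- The covariance matrix of `(X, A X + W)` for independent `X ~ N(0, S)` and `W ~ N(0, V)`. -/
def jointCov {R : Type*} [CommRing R] (S : Matrix m m R) (A : Matrix n m R) (V : Matrix n n R) :
    Matrix (m ⊕ n) (m ⊕ n) R :=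
  fromBlocks S (S * Aᵀ) (A * S) (A * S * Aᵀ + V)

variable [DecidableEq m] [DecidableEq n]

theorem jointCov_eq_mul_mul_transpose {R : Type*} [CommRing R] (S : Matrix m m R)
    (A : Matrix n m R) (V : Matrix n n R) :
    jointCov S A V = fromBlocks 1 0 A 1 * fromBlocks S 0 0 V * (fromBlocks 1 0 A 1)ᵀ := by
  simp [jointCov, fromBlocks_transpose, fromBlocks_multiply, Matrix.mul_assoc]

theorem PosDef.jointCov {S : Matrix m m ℝ} {V : Matrix n n ℝ} (hS : S.PosDef) (hV : V.PosDef)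
    (A : Matrix n m ℝ) : (jointCov S A V).PosDef := by
  have hL : IsUnit (fromBlocks 1 0 A 1 : Matrix (m ⊕ n) (m ⊕ n) ℝ) := by
    simp [isUnit_iff_isUnit_det]
  rw [jointCov_eq_mul_mul_transpose, ← conjTranspose_eq_transpose_of_trivial]
  exact hL.posDef_star_right_conjugate_iff.2 (hS.fromBlocks_zero_zero hV)

theorem det_jointCov {R : Type*} [CommRing R] (S : Matrix m m R) (A : Matrix n m R)
    (V : Matrix n n R) :
    (jointCov S A V).det = S.det * V.det := by
  simp [jointCov_eq_mul_mul_transpose]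

theorem dotProduct_inv_mul_mul_transpose_mulVec {R : Type*} [CommRing R] (L B : Matrix n n R)
    (z : n → R) : z ⬝ᵥ ((L * B * Lᵀ)⁻¹ *ᵥ z) = (L⁻¹ *ᵥ z) ⬝ᵥ (B⁻¹ *ᵥ (L⁻¹ *ᵥ z)) := by
  rw [Matrix.mul_inv_rev, Matrix.mul_inv_rev, ← transpose_nonsing_inv, ← mulVec_mulVec,
    dotProduct_mulVec, vecMul_transpose, mulVec_mulVec]

theorem sumElim_dotProduct_inv_jointCov_mulVec_sumElim {R : Type*} [CommRing R]
    {S : Matrix m m R} {V : Matrix n n R} (hS : IsUnit S) (hV : IsUnit V) (A : Matrix n m R)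
    (x : m → R) (y : n → R) :
    Sum.elim x y ⬝ᵥ ((jointCov S A V)⁻¹ *ᵥ Sum.elim x y) =
      x ⬝ᵥ (S⁻¹ *ᵥ x) + (y - A *ᵥ x) ⬝ᵥ (V⁻¹ *ᵥ (y - A *ᵥ x)) := by
  rw [jointCov_eq_mul_mul_transpose, dotProduct_inv_mul_mul_transpose_mulVec,
    inv_fromBlocks_zero₁₂_of_isUnit_iff 1 A 1 (iff_of_true isUnit_one isUnit_one),
    inv_fromBlocks_zero₁₂_of_isUnit_iff S 0 V (iff_of_true hS hV)]
  simp [fromBlocks_mulVec, neg_mulVec, neg_add_eq_sub]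

theorem fromBlocks_sub_sub_eq_jointCov {R : Type*} [CommRing R] {S D : Matrix n n R}
    (hS : S.IsSymm) (hS_det : IsUnit S.det) (hD : D.IsSymm) :
    fromBlocks S (S - D) (S - D) S = jointCov S (1 - D * S⁻¹) (2 • D - D * S⁻¹ * D) := by
  have hAT : (1 - D * S⁻¹)ᵀ = 1 - S⁻¹ * D := by
    rw [transpose_sub, transpose_one, transpose_mul, hD.eq, transpose_nonsing_inv, hS.eq]
  have hAS : (1 - D * S⁻¹) * S = S - D := by
    rw [Matrix.sub_mul, Matrix.one_mul, Matrix.mul_assoc, nonsing_inv_mul S hS_det, Matrix.mul_one]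
  have hSAT : S * (1 - S⁻¹ * D) = S - D := by
    rw [Matrix.mul_sub, Matrix.mul_one, ← Matrix.mul_assoc, mul_nonsing_inv S hS_det,
      Matrix.one_mul]
  have hSchur : (S - D) * (1 - S⁻¹ * D) + (2 • D - D * S⁻¹ * D) = S := by
    rw [Matrix.sub_mul, hSAT, Matrix.mul_sub, Matrix.mul_one, ← Matrix.mul_assoc, two_smul]
    abel
  rw [jointCov, hAT, hAS, hSAT, hSchur]

end Matrix

section Gaussian

variable {m n : Type*} [Fintype m] [Fintype n] [DecidableEq m] [DecidableEq n]

instance (c : m → ℝ) (C : Matrix m m ℝ) : SFinite (gaussianMeasure c C) := by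
  unfold gaussianMeasure
  infer_instance

theorem continuous_gaussianPdf (c : m → ℝ) (C : Matrix m m ℝ) : Continuous (gaussianPdf c C) := by
  unfold gaussianPdf
  fun_prop

theorem gaussianPdf_nonneg (c : m → ℝ) (C : Matrix m m ℝ) (x : m → ℝ) :
    0 ≤ gaussianPdf c C x := by
  unfold gaussianPdf
  positivity

theorem gaussianPdf_jointCov_sumElim {S : Matrix m m ℝ} {V : Matrix n n ℝ} (hS : S.PosDef)
    (hV : V.PosDef) (A : Matrix n m ℝ) (x : m → ℝ) (y : n → ℝ) :
    gaussianPdf 0 (jointCov S A V) (Sum.elim x y) =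
      gaussianPdf 0 S x * gaussianPdf (A *ᵥ x) V y := by
  have hnorm : (2 * Real.pi) ^ Fintype.card (m ⊕ n) * (S.det * V.det) =
      ((2 * Real.pi) ^ Fintype.card m * S.det) * ((2 * Real.pi) ^ Fintype.card n * V.det) := by
    rw [Fintype.card_sum]; ring
  simp only [gaussianPdf, sub_zero]
  rw [det_jointCov, hnorm, Real.sqrt_mul (mul_nonneg (by positivity) hS.det_pos.le),
    sumElim_dotProduct_inv_jointCov_mulVec_sumElim hS.isUnit hV.isUnit, mul_add, Real.exp_add]
  ring

theorem gaussianMeasure_bind_map_sumElim {S : Matrix m m ℝ} {V : Matrix n n ℝ} (hS : S.PosDef)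
    (hV : V.PosDef) (A : Matrix n m ℝ) :
    (gaussianMeasure 0 S).bind (fun x => (gaussianMeasure (A *ᵥ x) V).map (Sum.elim x)) =
      gaussianMeasure 0 (jointCov S A V) := by
  set e := MeasurableEquiv.sumPiEquivProdPi (fun _ : m ⊕ n => ℝ)
  have he (x : m → ℝ) (y : n → ℝ) : e.symm (x, y) = Sum.elim x y := by
    ext (i | i) <;> rfl
  set g : (m → ℝ) → (n → ℝ) → ℝ≥0∞ := fun x y => ENNReal.ofReal (gaussianPdf (A *ᵥ x) V y)
  have hg : Measurable (Function.uncurry g) := by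
    refine (Continuous.measurable ?_).ennreal_ofReal
    unfold gaussianPdf
    fun_prop
  have hκ (x : m → ℝ) : (Kernel.const _ volume).withDensity g x = gaussianMeasure (A *ᵥ x) V :=
    Kernel.withDensity_apply _ hg x
  calc (gaussianMeasure 0 S).bind (fun x => (gaussianMeasure (A *ᵥ x) V).map (Sum.elim x))
      = (gaussianMeasure 0 S).bind
          (fun x => ((Kernel.const _ volume).withDensity g x).map fun y => e.symm (x, y)) := by
        simp_rw [hκ, he]
    _ = (gaussianMeasure 0 S ⊗ₘ (Kernel.const _ volume).withDensity g).map e.symm :=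
        have := Kernel.IsSFiniteKernel.withDensity (Kernel.const (m → ℝ) (volume : Measure (n → ℝ)))
          (f := g) fun _ _ => ENNReal.ofReal_ne_top
        Measure.bind_map_eq_map_compProd _ _ e.symm.measurable
    _ = ((volume.prod volume).withDensity
          fun q => ENNReal.ofReal (gaussianPdf 0 S q.1) * g q.1 q.2).map e.symm := by
        rw [gaussianMeasure, Measure.withDensity_compProd_withDensity _ _
          (continuous_gaussianPdf 0 S).measurable.ennreal_ofReal hg
          (fun _ _ => ENNReal.ofReal_ne_top)]
    _ = gaussianMeasure 0 (jointCov S A V) := by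
        rw [← Measure.volume_eq_prod,
          (volume_measurePreserving_sumPiEquivProdPi_symm _).map_withDensity, gaussianMeasure]
        congr 1
        funext z
        obtain ⟨x, y, rfl⟩ : ∃ x y, z = Sum.elim x y := ⟨_, _, (Sum.elim_comp_inl_inr z).symm⟩
        rw [Function.comp_apply, MeasurableEquiv.symm_symm, ← he, e.apply_symm_apply, he,
          gaussianPdf_jointCov_sumElim hS hV, ENNReal.ofReal_mul (gaussianPdf_nonneg _ _ _)]

end Gaussian

theorem gaussian_knockoff_construction_general
    (p : ℕ)
    (S : Matrix (Fin p) (Fin p) ℝ) (hS : S.PosDef)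
    (s : Fin p → ℝ)
    (D : Matrix (Fin p) (Fin p) ℝ) (hD : D = Matrix.diagonal s)
    (V : Matrix (Fin p) (Fin p) ℝ) (hV : V = 2 • D - D * S⁻¹ * D)
    (hVpd : V.PosDef)
    (G : Matrix (Fin p ⊕ Fin p) (Fin p ⊕ Fin p) ℝ)
    (hG : G = Matrix.fromBlocks S (S - D) (S - D) S) :
    G.PosDef ∧
      (gaussianMeasure (0 : Fin p → ℝ) S).bind
        (fun x => Measure.map (fun xt => Sum.elim x xt)
          (gaussianMeasure ((1 - D * S⁻¹) *ᵥ x) V)) =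
      gaussianMeasure (0 : (Fin p ⊕ Fin p) → ℝ) G := by
  rw [hG, fromBlocks_sub_sub_eq_jointCov (isHermitian_iff_isSymm.1 hS.1) hS.det_pos.ne'.isUnit
    (hD ▸ isSymm_diagonal s), ← hV]
  exact ⟨hS.jointCov hVpd _, gaussianMeasure_bind_map_sumElim hS hVpd _⟩

/-- The Gaussian model-free knockoff construction: with `Σ` positive definite,
`D = diag s`, and `V = 2D - DΣ⁻¹D` positive definite, the block matrix
`G = [[Σ, Σ - D], [Σ - D, Σ]]` is positive definite, and sampling `x ~ N(0, Σ)`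
and then `x̃ ~ N((I - DΣ⁻¹)x, V)` produces the joint distribution `N(0, G)`
(on `(Fin p ⊕ Fin p) → ℝ`, where the left summand carries `x` and the right
summand carries `x̃`). -/
theorem gaussian_knockoff_construction
    (p : ℕ) (hp : 1 ≤ p)
    (S : Matrix (Fin p) (Fin p) ℝ) (hS : S.PosDef)
    (s : Fin p → ℝ)
    (D : Matrix (Fin p) (Fin p) ℝ) (hD : D = Matrix.diagonal s)
    (V : Matrix (Fin p) (Fin p) ℝ) (hV : V = 2 • D - D * S⁻¹ * D)
    (hVpd : V.PosDef)
    (G : Matrix (Fin p ⊕ Fin p) (Fin p ⊕ Fin p) ℝ)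
    (hG : G = Matrix.fromBlocks S (S - D) (S - D) S) :
    G.PosDef ∧
      (gaussianMeasure (0 : Fin p → ℝ) S).bind
        (fun x => Measure.map (fun xt => Sum.elim x xt)
          (gaussianMeasure ((1 - D * S⁻¹) *ᵥ x) V)) =
      gaussianMeasure (0 : (Fin p ⊕ Fin p) → ℝ) G :=
  gaussian_knockoff_construction_general p S hS s D hD V hV hVpd G hG
end
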